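/- If the main iterative algorithm terminates at iteration K (i.e., the set of outside points O^K is empty), then the returned polynomial θ_K is an optimal solution of the original separation problem P^s, and τ^s = τ_r^s(μ_K¹, μ_K²) = τ^s(S₁^K, S₂^K). -/

import Mathlib

noncomputable section
open Classical Finset Matrix

/-- Multi-indices in `n` variables of total degree at most `r`. -/
abbrev MIdx (n r : ℕ) := {α : Fin n → ℕ // ∑ i, α i ≤ r}

instance MIdx.fintype (n r : ℕ) : Fintype (MIdx n r) := by
  have h : ∀ a : MIdx n r, ∀ i, a.1 i ≤ r := fun a i =>
    le_trans (Finset.single_le_sum (fun j _ => Nat.zero_le (a.1 j)) (Finset.mem_univ i)) a.2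
  have hinj : Function.Injective
      (fun a : MIdx n r => (fun i => (⟨a.1 i, Nat.lt_succ_of_le (h a i)⟩ : Fin (r+1)))) := by
    intro a b hab
    apply Subtype.ext; funext i
    have := congrFun hab i
    simpa [Fin.mk.injEq] using this
  have : Finite (MIdx n r) := Finite.of_injective _ hinj
  exact Fintype.ofFinite _

/-- The monomial `x^α = x₁^{α₁} ⋯ x_n^{α_n}`. -/
def mono {n : ℕ} (x : Fin n → ℝ) (α : Fin n → ℕ) : ℝ := ∏ i, x i ^ α i

/-- Moments `y_α = ∑_{x ∈ S} μ_x x^α` of the measure `μ = ∑_{x∈S} μ_x δ_x`. -/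
def moments {n : ℕ} (S : Finset (Fin n → ℝ)) (μ : (Fin n → ℝ) → ℝ) (α : Fin n → ℕ) : ℝ :=
  ∑ x ∈ S, μ x * mono x α

/-- The localizing matrix `M_r(θ y)(α,β) = ∑_γ θ_γ y_{α+β+γ}`. -/
def locMat (n r : ℕ) (θ : MvPolynomial (Fin n) ℝ) (y : (Fin n → ℕ) → ℝ) :
    Matrix (MIdx n r) (MIdx n r) ℝ :=
  fun α β => ∑ γ ∈ θ.support, θ.coeff γ * y (fun i => α.1 i + β.1 i + γ i)

/-- Optimal value (infimum, in the extended reals) of the original separation problem `P^s`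
for datasets `S₁`, `S₂`, feasible set `Θ` and objective `f`. -/
def sepVal {n : ℕ} (Θ : Set (MvPolynomial (Fin n) ℝ)) (f : MvPolynomial (Fin n) ℝ → ℝ)
    (S1 S2 : Finset (Fin n → ℝ)) : EReal :=
  sInf ((fun θ => ((f θ : ℝ) : EReal)) ''
    {θ | θ ∈ Θ ∧ (∀ x ∈ S1, 0 ≤ MvPolynomial.eval x θ) ∧
      (∀ x ∈ S2, MvPolynomial.eval x θ ≤ 0)})

/-- Optimal value (infimum, in the extended reals) of the moment relaxation `P^s_r(y¹,y²)`. -/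
def relaxVal {n : ℕ} (Θ : Set (MvPolynomial (Fin n) ℝ)) (f : MvPolynomial (Fin n) ℝ → ℝ)
    (r : ℕ) (y1 y2 : (Fin n → ℕ) → ℝ) : EReal :=
  sInf ((fun θ => ((f θ : ℝ) : EReal)) ''
    {θ | θ ∈ Θ ∧ (locMat n r θ y1).PosSemidef ∧ (locMat n r (-θ) y2).PosSemidef})
/-- The uniform probability weight vector on the finite set `A`. -/
def uniformOn {n : ℕ} (A : Finset (Fin n → ℝ)) : (Fin n → ℝ) → ℝ :=
  fun x => if x ∈ A then (A.card : ℝ)⁻¹ else 0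

/-! Termination makes `θ_K` feasible for `P^s`, so `τ^s ≤ f θ_K`. Conversely, on point-supported
measures with nonnegative weights the localizing matrix of `θ` is a nonnegative combination of
rank-one matrices `v_x v_xᵀ` weighted by `θ(x)`, so every `θ` feasible for `P^s(S₁^K, S₂^K)` is
feasible for the relaxation. Optimality of `θ_K` for the relaxation and `S_i^K ⊆ S_i` then close
the cycle `f θ_K ≤ τ^s_r ≤ τ^s(S₁^K, S₂^K) ≤ τ^s ≤ f θ_K`. -/

lemma mono_add {n : ℕ} (x : Fin n → ℝ) (α β : Fin n → ℕ) :
    mono x (α + β) = mono x α * mono x β := by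
  simp only [mono, Pi.add_apply, pow_add, Finset.prod_mul_distrib]

lemma eval_eq_sum_mono {n : ℕ} (x : Fin n → ℝ) (θ : MvPolynomial (Fin n) ℝ) :
    MvPolynomial.eval x θ = ∑ γ ∈ θ.support, θ.coeff γ * mono x γ :=
  MvPolynomial.eval_eq' x θ

lemma locMat_moments_eq_sum {n : ℕ} (r : ℕ) (S : Finset (Fin n → ℝ)) (μ : (Fin n → ℝ) → ℝ)
    (θ : MvPolynomial (Fin n) ℝ) :
    locMat n r θ (moments S μ) = ∑ x ∈ S, (μ x * MvPolynomial.eval x θ) •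
      vecMulVec (fun α : MIdx n r => mono x α.1) (fun α => mono x α.1) := by
  ext α β
  simp only [locMat, moments, Matrix.sum_apply, Matrix.smul_apply, vecMulVec_apply, smul_eq_mul,
    eval_eq_sum_mono, Finset.mul_sum, Finset.sum_mul]
  rw [Finset.sum_comm]
  refine Finset.sum_congr rfl fun x _ => Finset.sum_congr rfl fun γ _ => ?_
  have hsplit : (fun i => α.1 i + β.1 i + γ i) = α.1 + β.1 + ⇑γ := rfl
  rw [hsplit, mono_add, mono_add]
  ring

lemma posSemidef_locMat_moments {n : ℕ} (r : ℕ) {S : Finset (Fin n → ℝ)}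
    {μ : (Fin n → ℝ) → ℝ} (hμ : ∀ x ∈ S, 0 ≤ μ x) {θ : MvPolynomial (Fin n) ℝ}
    (hθ : ∀ x ∈ S, 0 ≤ MvPolynomial.eval x θ) :
    (locMat n r θ (moments S μ)).PosSemidef := by
  rw [locMat_moments_eq_sum]
  refine posSemidef_sum S fun x hx => PosSemidef.smul ?_ (mul_nonneg (hμ x hx) (hθ x hx))
  simpa using posSemidef_vecMulVec_self_star (fun α : MIdx n r => mono x α.1)

lemma uniformOn_nonneg {n : ℕ} (A : Finset (Fin n → ℝ)) (x : Fin n → ℝ) :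
    0 ≤ uniformOn A x := by
  unfold uniformOn
  split_ifs <;> positivity

lemma sepVal_le_of_feasible {n : ℕ} {Θ : Set (MvPolynomial (Fin n) ℝ)}
    {f : MvPolynomial (Fin n) ℝ → ℝ} {S1 S2 : Finset (Fin n → ℝ)} {θ : MvPolynomial (Fin n) ℝ}
    (hΘ : θ ∈ Θ) (h1 : ∀ x ∈ S1, 0 ≤ MvPolynomial.eval x θ)
    (h2 : ∀ x ∈ S2, MvPolynomial.eval x θ ≤ 0) :
    sepVal Θ f S1 S2 ≤ f θ :=
  sInf_le ⟨θ, ⟨hΘ, h1, h2⟩, rfl⟩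

lemma sepVal_anti {n : ℕ} (Θ : Set (MvPolynomial (Fin n) ℝ)) (f : MvPolynomial (Fin n) ℝ → ℝ)
    {S1 S2 T1 T2 : Finset (Fin n → ℝ)} (h1 : T1 ⊆ S1) (h2 : T2 ⊆ S2) :
    sepVal Θ f T1 T2 ≤ sepVal Θ f S1 S2 := by
  refine sInf_le_sInf (Set.image_mono ?_)
  rintro θ ⟨hΘ, hS1, hS2⟩
  exact ⟨hΘ, fun x hx => hS1 x (h1 hx), fun x hx => hS2 x (h2 hx)⟩

lemma relaxVal_le_sepVal {n : ℕ} (Θ : Set (MvPolynomial (Fin n) ℝ))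
    (f : MvPolynomial (Fin n) ℝ → ℝ) (r : ℕ) (S1 S2 : Finset (Fin n → ℝ))
    {μ1 μ2 : (Fin n → ℝ) → ℝ} (hμ1 : ∀ x ∈ S1, 0 ≤ μ1 x) (hμ2 : ∀ x ∈ S2, 0 ≤ μ2 x) :
    relaxVal Θ f r (moments S1 μ1) (moments S2 μ2) ≤ sepVal Θ f S1 S2 := by
  refine sInf_le_sInf (Set.image_mono ?_)
  rintro θ ⟨hΘ, hS1, hS2⟩
  refine ⟨hΘ, posSemidef_locMat_moments r hμ1 hS1, posSemidef_locMat_moments r hμ2 ?_⟩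
  simpa using hS2

lemma le_relaxVal_of_optimal {n : ℕ} {Θ : Set (MvPolynomial (Fin n) ℝ)}
    {f : MvPolynomial (Fin n) ℝ → ℝ} {r : ℕ} {y1 y2 : (Fin n → ℕ) → ℝ}
    {θ₀ : MvPolynomial (Fin n) ℝ}
    (hopt : ∀ θ ∈ Θ, (locMat n r θ y1).PosSemidef → (locMat n r (-θ) y2).PosSemidef →
      f θ₀ ≤ f θ) :
    (f θ₀ : EReal) ≤ relaxVal Θ f r y1 y2 := by
  refine le_sInf ?_
  rintro _ ⟨θ, ⟨hΘ, h1, h2⟩, rfl⟩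
  exact EReal.coe_le_coe_iff.mpr (hopt θ hΘ h1 h2)

theorem algorithm_termination_optimal_general {n r : ℕ} (S1 S2 S1K S2K : Finset (Fin n → ℝ))
    (hK1 : S1K ⊆ S1) (hK2 : S2K ⊆ S2)
    (Θ : Set (MvPolynomial (Fin n) ℝ)) (f : MvPolynomial (Fin n) ℝ → ℝ)
    (θK : MvPolynomial (Fin n) ℝ)
    -- θ_K is an optimal solution of the relaxation P^s_r(y_K¹, y_K²):
    (hfeas : θK ∈ Θ ∧ (locMat n r θK (moments S1K (uniformOn S1K))).PosSemidef
      ∧ (locMat n r (-θK) (moments S2K (uniformOn S2K))).PosSemidef)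
    (hopt : ∀ θ ∈ Θ, (locMat n r θ (moments S1K (uniformOn S1K))).PosSemidef →
      (locMat n r (-θ) (moments S2K (uniformOn S2K))).PosSemidef → f θK ≤ f θ)
    -- termination: the set of outside points O^K is empty:
    (hterm1 : ∀ x ∈ S1, 0 ≤ MvPolynomial.eval x θK)
    (hterm2 : ∀ x ∈ S2, MvPolynomial.eval x θK ≤ 0) :
    ((f θK : ℝ) : EReal) = sepVal Θ f S1 S2
      ∧ sepVal Θ f S1 S2
          = relaxVal Θ f r (moments S1K (uniformOn S1K)) (moments S2K (uniformOn S2K))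
      ∧ relaxVal Θ f r (moments S1K (uniformOn S1K)) (moments S2K (uniformOn S2K))
          = sepVal Θ f S1K S2K := by
  have sep_le : sepVal Θ f S1 S2 ≤ f θK := sepVal_le_of_feasible hfeas.1 hterm1 hterm2
  have sepK_le_sep : sepVal Θ f S1K S2K ≤ sepVal Θ f S1 S2 := sepVal_anti Θ f hK1 hK2
  have relax_le_sepK := relaxVal_le_sepVal Θ f r S1K S2K
    (fun x _ => uniformOn_nonneg S1K x) (fun x _ => uniformOn_nonneg S2K x)
  have le_relax := le_relaxVal_of_optimal hopt
  refine ⟨le_antisymm ?_ sep_le, le_antisymm ?_ ?_, le_antisymm relax_le_sepK ?_⟩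
  · exact le_relax.trans (relax_le_sepK.trans sepK_le_sep)
  · exact sep_le.trans le_relax
  · exact relax_le_sepK.trans sepK_le_sep
  · exact sepK_le_sep.trans (sep_le.trans le_relax)

/-- if the main algorithm terminates at iteration `K` (the set of outside
points is empty), then the returned polynomial `θ_K` is an optimal solution of the original
separation problem `P^s`, and `τ^s = τ^s_r(μ_K¹,μ_K²) = τ^s(S₁^K, S₂^K)`. -/
theorem algorithm_termination_optimal {n r : ℕ} (S1 S2 S1K S2K : Finset (Fin n → ℝ))
    (hK1 : S1K ⊆ S1) (hK2 : S2K ⊆ S2) (hne1 : S1K.Nonempty) (hne2 : S2K.Nonempty)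
    (Θ : Set (MvPolynomial (Fin n) ℝ)) (f : MvPolynomial (Fin n) ℝ → ℝ)
    (θK : MvPolynomial (Fin n) ℝ)
    -- θ_K is an optimal solution of the relaxation P^s_r(y_K¹, y_K²):
    (hfeas : θK ∈ Θ ∧ (locMat n r θK (moments S1K (uniformOn S1K))).PosSemidef
      ∧ (locMat n r (-θK) (moments S2K (uniformOn S2K))).PosSemidef)
    (hopt : ∀ θ ∈ Θ, (locMat n r θ (moments S1K (uniformOn S1K))).PosSemidef →
      (locMat n r (-θ) (moments S2K (uniformOn S2K))).PosSemidef → f θK ≤ f θ)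
    -- termination: the set of outside points O^K is empty:
    (hterm1 : ∀ x ∈ S1, 0 ≤ MvPolynomial.eval x θK)
    (hterm2 : ∀ x ∈ S2, MvPolynomial.eval x θK ≤ 0) :
    ((f θK : ℝ) : EReal) = sepVal Θ f S1 S2
      ∧ sepVal Θ f S1 S2
          = relaxVal Θ f r (moments S1K (uniformOn S1K)) (moments S2K (uniformOn S2K))
      ∧ relaxVal Θ f r (moments S1K (uniformOn S1K)) (moments S2K (uniformOn S2K))
          = sepVal Θ f S1K S2K :=
  algorithm_termination_optimal_general S1 S2 S1K S2K hK1 hK2 Θ f θK hfeas hopt hterm1 hterm2
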